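/- For the rabbit program P_rabbits and every n ∈ ℕ: ⟨∅, rabbits(sⁿ(0))⟩ ⇓^m ⟨C, v_n⟩ for some cache C, where v_n is the genealogical rabbit tree of height n, and the memoized cost satisfies m ≤ 2·n + 1. -/

import Mathlib

/-!
Evaluating `adults(sᵏ⁺¹(0))` from the empty cache first evaluates `adults(sᵏ(0))`, which
tabulates `adults(sⁱ(0))` for all `i ≤ k`; the subsequent call `babies(sᵏ(0))` is new but
its only recursive call `adults(sᵏ⁻¹(0))` is read from the cache. So each generation adds
exactly two non-tabulated calls and `adults(sᵏ(0))` costs `2k + 1`. Finally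
`rabbits(sⁿ⁺¹(0))` calls `babies(sⁿ(0))`, which calls `adults(sⁿ⁻¹(0))`.
-/

namespace Memo

/-! ### Terms over a program signature -/

/-- Terms over operation symbols `Op`, constructors `Con` and variables `V`. -/
inductive Tm (Op Con V : Type) : Type
  | var : V → Tm Op Con V
  | op  : Op → List (Tm Op Con V) → Tm Op Con V
  | con : Con → List (Tm Op Con V) → Tm Op Con V

namespace Tm
variable {Op Con V : Type}

/-- Substitution. -/
def subst (σ : V → Tm Op Con V) : Tm Op Con V → Tm Op Con V
  | .var x => σ x
  | .op f ts => .op f (ts.attach.map fun t => subst σ t.1)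
  | .con c ts => .con c (ts.attach.map fun t => subst σ t.1)
decreasing_by
  all_goals simp_wf
  all_goals (have := List.sizeOf_lt_of_mem t.2; omega)

/-- The size `|t|` of a term (number of symbols). -/
def size : Tm Op Con V → ℕ
  | .var _ => 1
  | .op _ ts => 1 + (ts.attach.map fun t => size t.1).sum
  | .con _ ts => 1 + (ts.attach.map fun t => size t.1).sum
decreasing_by
  all_goals simp_wf
  all_goals (have := List.sizeOf_lt_of_mem t.2; omega)

/-- Number of occurrences of the variable `x` in a term. -/
def varCount [DecidableEq V] (x : V) : Tm Op Con V → ℕ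
  | .var y => if y = x then 1 else 0
  | .op _ ts => (ts.attach.map fun t => varCount x t.1).sum
  | .con _ ts => (ts.attach.map fun t => varCount x t.1).sum
decreasing_by
  all_goals simp_wf
  all_goals (have := List.sizeOf_lt_of_mem t.2; omega)

end Tm

/-- Values: ground constructor terms. -/
inductive IsValue {Op Con V : Type} : Tm Op Con V → Prop
  | con {c : Con} {ts} : (∀ t ∈ ts, IsValue t) → IsValue (.con c ts)

/-- Ground terms: terms without variables. -/
inductive Ground {Op Con V : Type} : Tm Op Con V → Prop
  | op {f : Op} {ts} : (∀ t ∈ ts, Ground t) → Ground (.op f ts)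
  | con {c : Con} {ts} : (∀ t ∈ ts, Ground t) → Ground (.con c ts)

/-- Patterns: terms built from constructors and variables only. -/
inductive IsPattern {Op Con V : Type} : Tm Op Con V → Prop
  | var (x : V) : IsPattern (.var x)
  | con {c : Con} {ts} : (∀ t ∈ ts, IsPattern t) → IsPattern (.con c ts)

/-- The variable `x` occurs in the given term. -/
inductive VarIn {Op Con V : Type} (x : V) : Tm Op Con V → Prop
  | var : VarIn x (.var x)
  | op {f : Op} {ts t} : t ∈ ts → VarIn x t → VarIn x (.op f ts)
  | con {c : Con} {ts t} : t ∈ ts → VarIn x t → VarIn x (.con c ts)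

/-! ### Programs -/

/-- A rewrite rule `f(p₁,…,pₖ) → r`. -/
structure Rule (Op Con V : Type) where
  lhsOp : Op
  lhsArgs : List (Tm Op Con V)
  rhs : Tm Op Con V

/-- A program: a finite set (list) of rewrite rules. -/
structure Prog (Op Con V : Type) where
  rules : List (Rule Op Con V)

/-- Well-formed rule: left-hand side arguments are patterns and all variables of the
right-hand side occur in the left-hand side. -/
def WFRule {Op Con V : Type} (r : Rule Op Con V) : Prop :=
  (∀ p ∈ r.lhsArgs, IsPattern p) ∧
  (∀ x, VarIn x r.rhs → ∃ p ∈ r.lhsArgs, VarIn x p)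

/-- Left-linearity: every variable occurs at most once in the left-hand side. -/
def LeftLinear {Op Con V : Type} [DecidableEq V] (r : Rule Op Con V) : Prop :=
  ∀ x : V, (r.lhsArgs.map (Tm.varCount x)).sum ≤ 1

/-- Non-ambiguity: no two rules have overlapping left-hand sides. -/
def NonAmbiguous {Op Con V : Type} (P : Prog Op Con V) : Prop :=
  ∀ r1 ∈ P.rules, ∀ r2 ∈ P.rules, r1.lhsOp = r2.lhsOp →
    ∀ σ1 σ2 : V → Tm Op Con V,
      r1.lhsArgs.map (Tm.subst σ1) = r2.lhsArgs.map (Tm.subst σ2) → r1 = r2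

/-- Orthogonal program: well-formed, left-linear and non-ambiguous. -/
def Orthogonal {Op Con V : Type} [DecidableEq V] (P : Prog Op Con V) : Prop :=
  (∀ r ∈ P.rules, WFRule r ∧ LeftLinear r) ∧ NonAmbiguous P

/-! ### Standard call-by-value big-step semantics (Figure 3) -/

mutual
/-- `Eval P t v`: the term `t` reduces to the value `v`. -/
inductive Eval {Op Con V : Type} (P : Prog Op Con V) : Tm Op Con V → Tm Op Con V → Prop
  | con {c : Con} {ts vs} : EvalList P ts vs → Eval P (.con c ts) (.con c vs)
  | split {f : Op} {ts vs v} : EvalList P ts vs → Eval P (.op f vs) v →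
      Eval P (.op f ts) v
  | apply {f : Op} {vs r σ v} : (∀ u ∈ vs, IsValue u) → r ∈ P.rules → r.lhsOp = f →
      vs = r.lhsArgs.map (Tm.subst σ) → Eval P (Tm.subst σ r.rhs) v →
      Eval P (.op f vs) v

/-- Left-to-right evaluation of a list of terms. -/
inductive EvalList {Op Con V : Type} (P : Prog Op Con V) :
    List (Tm Op Con V) → List (Tm Op Con V) → Prop
  | nil : EvalList P [] []
  | cons {t v ts vs} : Eval P t v → EvalList P ts vs → EvalList P (t :: ts) (v :: vs)
end

/-! ### Cost-annotated big-step semantics with memoization (Figure 4) -/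

/-- A cache: a set of pairs of a function call on values and its result value. -/
abbrev TCache (Op Con V : Type) := Set (Op × List (Tm Op Con V) × Tm Op Con V)

mutual
/-- `MEval P C₀ t m C₁ v`: starting with cache `C₀` the term `t` reduces to the value `v`
with updated cache `C₁` at cost `m` (number of non-tabulated function applications). -/
inductive MEval {Op Con V : Type} (P : Prog Op Con V) :
    TCache Op Con V → Tm Op Con V → ℕ → TCache Op Con V → Tm Op Con V → Prop
  | con {C0 C1 : TCache Op Con V} {c : Con} {ts m vs} :
      MEvalList P C0 ts m C1 vs →
      MEval P C0 (.con c ts) m C1 (.con c vs)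
  | split {C0 C1 C2 : TCache Op Con V} {f : Op} {ts m vs n v} :
      MEvalList P C0 ts m C1 vs →
      MEval P C1 (.op f vs) n C2 v →
      MEval P C0 (.op f ts) (n + m) C2 v
  | read {C : TCache Op Con V} {f : Op} {vs v} :
      (∀ u ∈ vs, IsValue u) → (f, vs, v) ∈ C →
      MEval P C (.op f vs) 0 C v
  | update {C C' : TCache Op Con V} {f : Op} {vs r σ m v} :
      (∀ u ∈ vs, IsValue u) → (∀ u, (f, vs, u) ∉ C) →
      r ∈ P.rules → r.lhsOp = f → vs = r.lhsArgs.map (Tm.subst σ) →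
      MEval P C (Tm.subst σ r.rhs) m C' v →
      MEval P C (.op f vs) (m + 1) (insert (f, vs, v) C') v

/-- Left-to-right evaluation of a list of terms, threading the cache and summing costs. -/
inductive MEvalList {Op Con V : Type} (P : Prog Op Con V) :
    TCache Op Con V → List (Tm Op Con V) → ℕ → TCache Op Con V → List (Tm Op Con V) → Prop
  | nil {C : TCache Op Con V} : MEvalList P C [] 0 C []
  | cons {C0 C1 C2 : TCache Op Con V} {t m v ts n vs} :
      MEval P C0 t m C1 v → MEvalList P C1 ts n C2 vs →
      MEvalList P C0 (t :: ts) (m + n) C2 (v :: vs)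
end

/-! ### Heaps -/

/-- Locations. -/
abbrev Loc := ℕ

/-- A heap: a (partial) map from locations to constructors applied to locations,
i.e. a term graph over the constructors whose nodes are locations. -/
abbrev Heap (Con : Type) := Loc → Option (Con × List Loc)

/-- Domain (set of nodes) of a heap. -/
def heapDom {Con : Type} (h : Heap Con) : Set Loc := {l | h l ≠ none}

/-- A heap is maximally shared if equally labeled locations coincide. -/
def MaxShared {Con : Type} (h : Heap Con) : Prop :=
  ∀ l1 l2 c ls, h l1 = some (c, ls) → h l2 = some (c, ls) → l1 = l2

/-- All successors of heap nodes are again heap nodes. -/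
def HeapClosed {Con : Type} (h : Heap Con) : Prop :=
  ∀ l c ls, h l = some (c, ls) → ∀ l' ∈ ls, l' ∈ heapDom h

/-- `HUnfolds h l v`: the value `v` is stored at location `l`, i.e. `v = [l]_h` is
obtained by unfolding the heap `h` starting from location `l`. -/
inductive HUnfolds {Op Con V : Type} (h : Heap Con) : Loc → Tm Op Con V → Prop
  | mk {l : Loc} {c ls ts} : h l = some (c, ls) → ls.length = ts.length →
      (∀ (i : ℕ) l' t, ls[i]? = some l' → ts[i]? = some t → HUnfolds h l' t) →
      HUnfolds h l (.con c ts)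

/-- `merge(h, c(ℓ⃗)) = (h', ℓ)`: extension of the heap `h` by `c(ℓ⃗)` retaining maximal
sharing; an existing location is reused if possible, otherwise the first fresh location
is used. -/
inductive Merge {Con : Type} (h : Heap Con) (c : Con) (ls : List Loc) : Heap Con → Loc → Prop
  | reuse {l : Loc} : h l = some (c, ls) → Merge h c ls h l
  | fresh {l : Loc} : (∀ l', h l' ≠ some (c, ls)) → h l = none →
      (∀ l' < l, h l' ≠ none) →
      Merge h c ls (Function.update h l (some (c, ls))) l

/-! ### Expressions, evaluation contexts and configurations -/

/-- Expressions: terms extended with locations and markers `f⟨ℓ⃗⟩{e}`. -/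
inductive Expr (Op Con : Type) : Type
  | loc : Loc → Expr Op Con
  | op : Op → List (Expr Op Con) → Expr Op Con
  | con : Con → List (Expr Op Con) → Expr Op Con
  | marked : Op → List Loc → Expr Op Con → Expr Op Con

/-- Value expressions: built from constructors and locations only. -/
inductive IsValExpr {Op Con : Type} : Expr Op Con → Prop
  | loc (l : Loc) : IsValExpr (.loc l)
  | con {c : Con} {es} : (∀ e ∈ es, IsValExpr e) → IsValExpr (.con c es)

/-- Evaluation contexts: a unique hole, with only locations to the left of the hole. -/
inductive Ctx (Op Con : Type) : Type
  | hole : Ctx Op Con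
  | marked : Op → List Loc → Ctx Op Con → Ctx Op Con
  | op : Op → List Loc → Ctx Op Con → List (Expr Op Con) → Ctx Op Con
  | con : Con → List Loc → Ctx Op Con → List (Expr Op Con) → Ctx Op Con

/-- Plugging an expression into the hole of an evaluation context. -/
def Ctx.plug {Op Con : Type} : Ctx Op Con → Expr Op Con → Expr Op Con
  | .hole, e => e
  | .marked f ls E, e => .marked f ls (E.plug e)
  | .op f ls E es, e => .op f (ls.map Expr.loc ++ E.plug e :: es)
  | .con c ls E es, e => .con c (ls.map Expr.loc ++ E.plug e :: es)

/-- A cache over locations. -/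
abbrev HCache (Op : Type) := Set (Op × List Loc × Loc)

/-- Configurations: a cache, a heap and an expression. -/
abbrev Config (Op Con : Type) := HCache Op × Heap Con × Expr Op Con

/-- Instantiation of a term by a substitution mapping variables to locations,
yielding an expression. -/
def instE {Op Con V : Type} (σ : V → Loc) : Tm Op Con V → Expr Op Con
  | .var x => .loc (σ x)
  | .op f ts => .op f (ts.attach.map fun t => instE σ t.1)
  | .con c ts => .con c (ts.attach.map fun t => instE σ t.1)
decreasing_by
  all_goals simp_wf
  all_goals (have := List.sizeOf_lt_of_mem t.2; omega)

/-- `PMatch h σ p l`: the pattern `p` matches the value stored at location `l` of the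
heap `h`, binding the variables of `p` to locations according to `σ`.  This captures
matching via a homomorphism from the canonical tree of `p` into the heap, `σ` being the
induced substitution. -/
inductive PMatch {Op Con V : Type} (h : Heap Con) (σ : V → Loc) : Tm Op Con V → Loc → Prop
  | var {x l} : σ x = l → PMatch h σ (.var x) l
  | con {c : Con} {ps l ls} : h l = some (c, ls) → ps.length = ls.length →
      (∀ (i : ℕ) p l', ps[i]? = some p → ls[i]? = some l' → PMatch h σ p l') →
      PMatch h σ (.con c ps) l

/-! ### Small-step semantics with memoization and sharing (Figure 6) -/

/-- The (apply) step. -/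
inductive ApplyStep {Op Con V : Type} (P : Prog Op Con V) : Config Op Con → Config Op Con → Prop
  | mk {C : HCache Op} {h : Heap Con} {E : Ctx Op Con} {f ls r σ} :
      (∀ l, (f, ls, l) ∉ C) →
      r ∈ P.rules → r.lhsOp = f →
      r.lhsArgs.length = ls.length →
      (∀ (i : ℕ) p l, r.lhsArgs[i]? = some p → ls[i]? = some l → PMatch h σ p l) →
      ApplyStep P (C, h, E.plug (.op f (ls.map Expr.loc)))
        (C, h, E.plug (.marked f ls (instE σ r.rhs)))

/-- The (read) step. -/
inductive ReadStep {Op Con : Type} : Config Op Con → Config Op Con → Prop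
  | mk {C : HCache Op} {h : Heap Con} {E : Ctx Op Con} {f ls l} :
      (f, ls, l) ∈ C →
      ReadStep (C, h, E.plug (.op f (ls.map Expr.loc))) (C, h, E.plug (.loc l))

/-- The (store) step. -/
inductive StoreStep {Op Con : Type} : Config Op Con → Config Op Con → Prop
  | mk {C : HCache Op} {h : Heap Con} {E : Ctx Op Con} {f ls l} :
      StoreStep (C, h, E.plug (.marked f ls (.loc l)))
        (insert (f, ls, l) C, h, E.plug (.loc l))

/-- The (merge) step. -/
inductive MergeStep {Op Con : Type} : Config Op Con → Config Op Con → Prop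
  | mk {C : HCache Op} {h h' : Heap Con} {E : Ctx Op Con} {c ls l} :
      Merge h c ls h' l →
      MergeStep (C, h, E.plug (.con c (ls.map Expr.loc))) (C, h', E.plug (.loc l))

/-- `→sm`: read, store or merge. -/
def SmStep {Op Con : Type} : Config Op Con → Config Op Con → Prop :=
  fun a b => ReadStep a b ∨ StoreStep a b ∨ MergeStep a b

/-- `⇒`: apply, read, store or merge. -/
def Step {Op Con V : Type} (P : Prog Op Con V) : Config Op Con → Config Op Con → Prop :=
  fun a b => ApplyStep P a b ∨ SmStep a b

/-- n-fold composition of `⇒`. -/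
def StepN {Op Con V : Type} (P : Prog Op Con V) : ℕ → Config Op Con → Config Op Con → Prop
  | 0 => fun a b => a = b
  | n + 1 => fun a c => ∃ b, Step P a b ∧ StepN P n b c

/-- `→sm*`. -/
def SmSteps {Op Con : Type} : Config Op Con → Config Op Con → Prop :=
  Relation.ReflTransGen SmStep

/-- `⇛ = →sm* · ⇀ · →sm*`. -/
def MacroStep {Op Con V : Type} (P : Prog Op Con V) : Config Op Con → Config Op Con → Prop :=
  fun a d => ∃ b c, SmSteps a b ∧ ApplyStep P b c ∧ SmSteps c d

/-- `⇛^m`, the m-fold composition of `⇛`: a reduction containing exactly `m` apply steps. -/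
def MacroStepN {Op Con V : Type} (P : Prog Op Con V) : ℕ → Config Op Con → Config Op Con → Prop
  | 0 => fun a b => a = b
  | n + 1 => fun a c => ∃ b, MacroStep P a b ∧ MacroStepN P n b c

/-! ### Well-formed configurations -/

/-- A marker `f⟨ℓ⃗⟩{·}` occurs somewhere in the given expression. -/
inductive MarkedIn {Op Con : Type} (f : Op) (ls : List Loc) : Expr Op Con → Prop
  | here {e} : MarkedIn f ls (.marked f ls e)
  | op {g es e} : e ∈ es → MarkedIn f ls e → MarkedIn f ls (.op g es)
  | con {c es e} : e ∈ es → MarkedIn f ls e → MarkedIn f ls (.con c es)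
  | marked {g ls' e} : MarkedIn f ls e → MarkedIn f ls (.marked g ls' e)

/-- The location `l` occurs in the given expression. -/
inductive LocInExpr {Op Con : Type} (l : Loc) : Expr Op Con → Prop
  | loc : LocInExpr l (.loc l)
  | op {f es e} : e ∈ es → LocInExpr l e → LocInExpr l (.op f es)
  | con {c es e} : e ∈ es → LocInExpr l e → LocInExpr l (.con c es)
  | markedArg {f ls e} : l ∈ ls → LocInExpr l (.marked f ls e)
  | markedBody {f ls e} : LocInExpr l e → LocInExpr l (.marked f ls e)

/-- Well-formed configurations: the heap is a maximally shared term graph, the cache is a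
function compatible with the expression, and there are no dangling locations. -/
def WF {Op Con : Type} (cfg : Config Op Con) : Prop :=
  MaxShared cfg.2.1 ∧ HeapClosed cfg.2.1 ∧
  (∀ f ls l1 l2, (f, ls, l1) ∈ cfg.1 → (f, ls, l2) ∈ cfg.1 → l1 = l2) ∧
  (∀ f ls, MarkedIn f ls cfg.2.2 → ∀ l, (f, ls, l) ∉ cfg.1) ∧
  (∀ f ls l, (f, ls, l) ∈ cfg.1 → l ∈ heapDom cfg.2.1 ∧ ∀ l' ∈ ls, l' ∈ heapDom cfg.2.1) ∧
  (∀ l, LocInExpr l cfg.2.2 → l ∈ heapDom cfg.2.1)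

/-! ### Unfolding of expressions and caches -/

/-- `EUnfolds h e t`: the term `t = [e]_h` is obtained from `e` by following pointers to
the heap and erasing markers. -/
inductive EUnfolds {Op Con V : Type} (h : Heap Con) : Expr Op Con → Tm Op Con V → Prop
  | loc {l t} : HUnfolds h l t → EUnfolds h (.loc l) t
  | op {f : Op} {es ts} : es.length = ts.length →
      (∀ (i : ℕ) e t, es[i]? = some e → ts[i]? = some t → EUnfolds h e t) →
      EUnfolds h (.op f es) (.op f ts)
  | con {c : Con} {es ts} : es.length = ts.length →
      (∀ (i : ℕ) e t, es[i]? = some e → ts[i]? = some t → EUnfolds h e t) →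
      EUnfolds h (.con c es) (.con c ts)
  | marked {f ls e t} : EUnfolds h e t → EUnfolds h (.marked f ls e) t

/-- `[C]_h`: the unfolding of a location cache into a term cache. -/
def cacheUnfold {Op Con : Type} (V : Type) (h : Heap Con) (C : HCache Op) :
    TCache Op Con V :=
  {x | ∃ ls l, (x.1, ls, l) ∈ C ∧ ls.length = x.2.1.length ∧
    (∀ (i : ℕ) l' t, ls[i]? = some l' → x.2.1[i]? = some t → HUnfolds h l' t) ∧
    HUnfolds h l x.2.2}

/-- An initial configuration: empty cache, maximally shared heap without dangling
locations, and an expression `f(v₁,…,vₖ)` whose arguments are value expressions. -/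
def InitialConf {Op Con : Type} (h : Heap Con) (e : Expr Op Con) : Prop :=
  MaxShared h ∧ HeapClosed h ∧ (∀ l, LocInExpr l e → l ∈ heapDom h) ∧
  ∃ (f : Op) (es : List (Expr Op Con)), e = .op f es ∧ ∀ e' ∈ es, IsValExpr e'

/-! ### Sizes and weights -/

/-- The size `|e|` of an expression: every symbol and location counts one. -/
def exprSize {Op Con : Type} : Expr Op Con → ℕ
  | .loc _ => 1
  | .op _ es => 1 + (es.attach.map fun e => exprSize e.1).sum
  | .con _ es => 1 + (es.attach.map fun e => exprSize e.1).sum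
  | .marked _ _ e => 1 + exprSize e
decreasing_by
  all_goals simp_wf
  all_goals (have := List.sizeOf_lt_of_mem e.2; omega)

/-- The weight `‖e‖` of an expression: like the size, but locations count zero. -/
def weight {Op Con : Type} : Expr Op Con → ℕ
  | .loc _ => 0
  | .op _ es => 1 + (es.attach.map fun e => weight e.1).sum
  | .con _ es => 1 + (es.attach.map fun e => weight e.1).sum
  | .marked _ _ e => 1 + weight e
decreasing_by
  all_goals simp_wf
  all_goals (have := List.sizeOf_lt_of_mem e.2; omega)

/-- `Δ`, the maximal size of a right-hand side of the program. -/
def progDelta {Op Con V : Type} (P : Prog Op Con V) : ℕ :=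
  (P.rules.map fun r => r.rhs.size).foldr max 1

/-- The size of a configuration: cardinality of the cache plus number of heap nodes plus
size of the expression. -/
noncomputable def confSize {Op Con : Type} (cfg : Config Op Con) : ℕ :=
  cfg.1.ncard + (heapDom cfg.2.1).ncard + exprSize cfg.2.2

open Classical in
/-- The number of apply steps along a list of configurations. -/
noncomputable def applyCount {Op Con V : Type} (P : Prog Op Con V) :
    List (Config Op Con) → ℕ
  | [] => 0
  | [_] => 0
  | a :: b :: rest => (if ApplyStep P a b then 1 else 0) + applyCount P (b :: rest)

end Memo

namespace Rabbits

/-- Constructors: natural numbers `0`, `s` and rabbit trees (baby/adult leaves,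
unary baby nodes `B◦`, binary adult nodes `B•`). -/
inductive RCon : Type
  | zero | succ | leafBaby | leafAdult | nodeBaby | nodeAdult

/-- Operation symbols of the rabbit program. -/
inductive ROp : Type
  | rabbits | adults | babies

abbrev T := Memo.Tm ROp RCon ℕ

/-- The recursion variable. -/
def x : T := .var 0

/-- The orthogonal program `P_rabbits`:
`rabbits(0) → L◦`, `rabbits(s(n)) → babies(n)`, `adults(0) → L•`,
`adults(s(n)) → B•(adults(n), babies(n))`, `babies(0) → L◦`,
`babies(s(n)) → B◦(adults(n))`. -/
def prog : Memo.Prog ROp RCon ℕ :=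
  ⟨[⟨.rabbits, [.con .zero []], .con .leafBaby []⟩,
    ⟨.rabbits, [.con .succ [x]], .op .babies [x]⟩,
    ⟨.adults, [.con .zero []], .con .leafAdult []⟩,
    ⟨.adults, [.con .succ [x]], .con .nodeAdult [.op .adults [x], .op .babies [x]]⟩,
    ⟨.babies, [.con .zero []], .con .leafBaby []⟩,
    ⟨.babies, [.con .succ [x]], .con .nodeBaby [.op .adults [x]]⟩]⟩

/-- The numeral `sⁿ(0)`. -/
def church : ℕ → T
  | 0 => .con .zero []
  | n + 1 => .con .succ [church n]


end Rabbits

namespace Memo.Tm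

variable {Op Con V : Type}

@[simp]
theorem subst_var (σ : V → Tm Op Con V) (v : V) : subst σ (.var v) = σ v := by
  rw [subst]

@[simp]
theorem subst_op (σ : V → Tm Op Con V) (f : Op) (ts : List (Tm Op Con V)) :
    subst σ (.op f ts) = .op f (ts.map (subst σ)) := by
  rw [subst]; simp

@[simp]
theorem subst_con (σ : V → Tm Op Con V) (c : Con) (ts : List (Tm Op Con V)) :
    subst σ (.con c ts) = .con c (ts.map (subst σ)) := by
  rw [subst]; simp

end Memo.Tm

namespace Rabbits

open Memo

theorem isValue_church (n : ℕ) : IsValue (church n) := by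
  induction n with
  | zero => exact .con (by simp)
  | succ n ih => exact .con (by simpa [church] using ih)

theorem church_injective : Function.Injective church := by
  intro i j h
  induction i generalizing j with
  | zero => cases j <;> simp_all [church]
  | succ i ih =>
    cases j with
    | zero => simp [church] at h
    | succ j =>
      simp only [church, Tm.con.injEq, List.cons.injEq, true_and, and_true] at h
      rw [ih h]

mutual
def adultTree : ℕ → T
  | 0 => .con .leafAdult []
  | n + 1 => .con .nodeAdult [adultTree n, babyTree n]

def babyTree : ℕ → T
  | 0 => .con .leafBaby []
  | n + 1 => .con .nodeBaby [adultTree n]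
end

/-- `v_n`: `rabbits(sⁿ⁺¹(0))` unfolds to `babies(sⁿ(0))`. -/
def rabbitTree : ℕ → T
  | 0 => .con .leafBaby []
  | n + 1 => babyTree n

/-- The instantiated right-hand side of the rule of `prog` that fires on `f(sᵏ(0))`. -/
def callBody : ROp → ℕ → T
  | .rabbits, 0 => .con .leafBaby []
  | .rabbits, k + 1 => .op .babies [church k]
  | .adults, 0 => .con .leafAdult []
  | .adults, k + 1 => .con .nodeAdult [.op .adults [church k], .op .babies [church k]]
  | .babies, 0 => .con .leafBaby []
  | .babies, k + 1 => .con .nodeBaby [.op .adults [church k]]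

theorem exists_rule_of_call (f : ROp) (k : ℕ) :
    ∃ r ∈ prog.rules, r.lhsOp = f ∧ ∃ σ : ℕ → T,
      [church k] = r.lhsArgs.map (Tm.subst σ) ∧ Tm.subst σ r.rhs = callBody f k := by
  cases f <;> cases k <;> simp [prog, church, callBody, x] <;>
    first | exact ⟨church 0⟩ | exact ⟨fun _ => church _, rfl, rfl⟩

theorem eval_call {f : ROp} {k : ℕ} {v : T} (h : Eval prog (callBody f k) v) :
    Eval prog (.op f [church k]) v := by
  obtain ⟨r, hr, rfl, σ, hlhs, hrhs⟩ := exists_rule_of_call f k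
  exact .apply (by simpa using isValue_church k) hr rfl hlhs (hrhs ▸ h)

theorem meval_call {f : ROp} {k m : ℕ} {C C' : TCache ROp RCon ℕ} {v : T}
    (hC : ∀ u, (f, [church k], u) ∉ C) (h : MEval prog C (callBody f k) m C' v) :
    MEval prog C (.op f [church k]) (m + 1) (insert (f, [church k], v) C') v := by
  obtain ⟨r, hr, rfl, σ, hlhs, hrhs⟩ := exists_rule_of_call f k
  exact .update (by simpa using isValue_church k) hC hr rfl hlhs (hrhs ▸ h)

theorem eval_adults_babies (k : ℕ) :
    Eval prog (.op .adults [church k]) (adultTree k) ∧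
      Eval prog (.op .babies [church k]) (babyTree k) := by
  induction k with
  | zero => exact ⟨eval_call (.con .nil), eval_call (.con .nil)⟩
  | succ k ih =>
    exact ⟨eval_call (.con (.cons ih.1 (.cons ih.2 .nil))), eval_call (.con (.cons ih.1 .nil))⟩

theorem eval_rabbits (n : ℕ) : Eval prog (.op .rabbits [church n]) (rabbitTree n) := by
  cases n with
  | zero => exact eval_call (.con .nil)
  | succ n => exact eval_call (eval_adults_babies n).2

/-- The cache left by the memoized evaluation of `adults(sᵏ(0))` from the empty cache. -/
def adultsCache : ℕ → TCache ROp RCon ℕ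
  | 0 => {(.adults, [church 0], adultTree 0)}
  | k + 1 => insert (.adults, [church (k + 1)], adultTree (k + 1))
      (insert (.babies, [church k], babyTree k) (adultsCache k))

theorem adults_mem_adultsCache (k : ℕ) :
    (.adults, [church k], adultTree k) ∈ adultsCache k := by
  cases k <;> simp [adultsCache]

theorem lt_of_babies_mem_adultsCache {k j : ℕ} {u : T}
    (h : (.babies, [church j], u) ∈ adultsCache k) : j < k := by
  induction k with
  | zero => simp [adultsCache] at h
  | succ k ih =>
    simp only [adultsCache, Set.mem_insert_iff, Prod.mk.injEq, reduceCtorEq, false_and,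
      List.cons.injEq, and_true, true_and, false_or] at h
    rcases h with ⟨h, -⟩ | h
    · exact church_injective h ▸ k.lt_succ_self
    · exact (ih h).trans k.lt_succ_self

theorem meval_babies_of_adultsCache (k : ℕ) :
    MEval prog (adultsCache k) (.op .babies [church k]) 1
      (insert (.babies, [church k], babyTree k) (adultsCache k)) (babyTree k) := by
  have hnew : ∀ u, (ROp.babies, [church k], u) ∉ adultsCache k :=
    fun _ h => (lt_of_babies_mem_adultsCache h).false
  cases k with
  | zero => exact meval_call hnew (.con .nil)
  | succ k =>
    have hread : MEval prog (adultsCache (k + 1)) (.op .adults [church k]) 0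
        (adultsCache (k + 1)) (adultTree k) :=
      .read (by simpa using isValue_church k)
        (Set.mem_insert_of_mem _ (Set.mem_insert_of_mem _ (adults_mem_adultsCache k)))
    exact meval_call hnew (.con (.cons hread .nil))

theorem meval_adults (k : ℕ) :
    MEval prog ∅ (.op .adults [church k]) (2 * k + 1) (adultsCache k) (adultTree k) := by
  induction k with
  | zero =>
    rw [adultsCache, Set.singleton_def]
    exact meval_call (fun _ => Set.notMem_empty _) (.con .nil)
  | succ k ih =>
    have := meval_call (f := .adults) (k := k + 1) (fun _ => Set.notMem_empty _)
      (.con (.cons ih (.cons (meval_babies_of_adultsCache k) .nil)))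
    rwa [show 2 * k + 1 + (1 + 0) + 1 = 2 * (k + 1) + 1 by ring] at this

theorem exists_meval_babies (k : ℕ) : ∃ m C, m ≤ 2 * k + 1 ∧
    MEval prog ∅ (.op .babies [church k]) m C (babyTree k) := by
  cases k with
  | zero => exact ⟨_, _, le_rfl, meval_call (fun _ => Set.notMem_empty _) (.con .nil)⟩
  | succ k =>
    exact ⟨_, _, by omega,
      meval_call (fun _ => Set.notMem_empty _) (.con (.cons (meval_adults k) .nil))⟩

theorem exists_meval_rabbits (n : ℕ) : ∃ m C, m ≤ 2 * n + 1 ∧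
    MEval prog ∅ (.op .rabbits [church n]) m C (rabbitTree n) := by
  cases n with
  | zero => exact ⟨_, _, le_rfl, meval_call (fun _ => Set.notMem_empty _) (.con .nil)⟩
  | succ n =>
    obtain ⟨m, C, hm, h⟩ := exists_meval_babies n
    exact ⟨_, _, by omega, meval_call (fun _ => Set.notMem_empty _) h⟩

/-- Example 17.  For every `n`, the memoized evaluation of
`rabbits(sⁿ(0))` yields the genealogical rabbit tree `v_n` of height `n` (the unique
value of `rabbits(sⁿ(0))` in the standard call-by-value semantics), at memoized cost
`m ≤ 2·n + 1`. -/
theorem statement19 (n : ℕ) :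
    ∃ (m : ℕ) (C : Memo.TCache ROp RCon ℕ) (v : T),
      Memo.Eval prog (.op .rabbits [church n]) v ∧
      Memo.MEval prog ∅ (.op .rabbits [church n]) m C v ∧
      m ≤ 2 * n + 1 := by
  obtain ⟨m, C, hm, h⟩ := exists_meval_rabbits n
  exact ⟨m, C, rabbitTree n, eval_rabbits n, h, hm⟩

end Rabbits
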